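/- arXiv:math/0603673 — 2 statements merged into one kernel-verified Lean document; each statement's English description precedes it below -/
import Mathlib

section
/- Let P = {(x_1, y_1), …, (x_k, y_k)} be a finite set of points in ℝ². All k points lie on the graph of a single 1-Lipschitz function f : ℝ → ℝ if and only if the rotated points (u_i, v_i) := (x_i + y_i, x_i − y_i), i = 1, …, k, form a chain in the coordinatewise partial order on ℝ², i.e., for every pair i, j either (u_i ≤ u_j and v_i ≤ v_j) or (u_j ≤ u_i and v_j ≤ v_i). -/
/-- The points `(x i, y i)` all lie on the graph of a single 1-Lipschitz function
`f : ℝ → ℝ` iff the rotated points `(x i + y i, x i − y i)` form a chain in the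
coordinatewise partial order on `ℝ²`. -/
theorem lipschitz_graph_iff_rotated_chain (k : ℕ) (x y : Fin k → ℝ) :
    (∃ f : ℝ → ℝ, (∀ s t : ℝ, |f s - f t| ≤ |s - t|) ∧ ∀ i, f (x i) = y i) ↔
      ∀ i j, (x i + y i ≤ x j + y j ∧ x i - y i ≤ x j - y j) ∨
        (x j + y j ≤ x i + y i ∧ x j - y j ≤ x i - y i) := by
  constructor
  · rintro ⟨f, hf, hfx⟩ i j
    have h := hf (x i) (x j)
    rw [hfx i, hfx j] at h
    rcases abs_le.mp h with ⟨h1, h2⟩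
    rcases le_total (x i) (x j) with hx | hx
    · left
      rw [abs_of_nonpos (by linarith)] at h1 h2
      constructor <;> linarith
    · right
      rw [abs_of_nonneg (by linarith)] at h1 h2
      constructor <;> linarith
  · intro hchain
    have key : ∀ i j, y i - y j ≤ |x i - x j| := by
      intro i j
      rcases hchain i j with ⟨h1, h2⟩ | ⟨h1, h2⟩
      · calc y i - y j ≤ x j - x i := by linarith
          _ ≤ |x i - x j| := by rw [abs_sub_comm]; exact le_abs_self _
      · calc y i - y j ≤ x i - x j := by linarith
          _ ≤ |x i - x j| := le_abs_self _
    rcases Nat.eq_zero_or_pos k with hk | hk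
    · subst hk
      exact ⟨fun _ => 0, fun s t => by simp [abs_nonneg], fun i => i.elim0⟩
    · have hne : (Finset.univ : Finset (Fin k)).Nonempty := ⟨⟨0, hk⟩, Finset.mem_univ _⟩
      refine ⟨fun s => Finset.univ.sup' hne (fun i => y i - |s - x i|), ?_, ?_⟩
      · intro s t
        have main : ∀ s t : ℝ,
            Finset.univ.sup' hne (fun i => y i - |s - x i|)
              - Finset.univ.sup' hne (fun i => y i - |t - x i|) ≤ |s - t| := by
          intro s t
          rw [sub_le_iff_le_add, Finset.sup'_le_iff]
          intro i _
          have h1 : y i - |t - x i| ≤ Finset.univ.sup' hne (fun j => y j - |t - x j|) :=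
            Finset.le_sup' (fun j => y j - |t - x j|) (Finset.mem_univ i)
          have h2 : |s - x i| ≥ |t - x i| - |s - t| := by
            have := abs_sub_abs_le_abs_sub (t - x i) (s - x i)
            have h3 : |t - x i - (s - x i)| = |s - t| := by
              rw [show t - x i - (s - x i) = -(s - t) by ring, abs_neg]
            linarith
          linarith
        rw [abs_sub_le_iff]
        refine ⟨main s t, ?_⟩
        have := main t s
        rwa [abs_sub_comm t s] at this
      · intro i
        apply le_antisymm
        · rw [Finset.sup'_le_iff]
          intro j _
          have := key j i
          rw [abs_sub_comm] at this
          linarith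
        · have := Finset.le_sup' (fun j => y j - |x i - x j|) (Finset.mem_univ i)
          simp only [sub_self, abs_zero, sub_zero] at this
          exact this
end

section
/- For a finite set P of points in the unit square [0,1]², the maximum cardinality of a subset of P lying on the graph of a single 1-Lipschitz function f : [0,1] → ℝ equals the maximum cardinality of a subset S ⊆ P such that for all (x, y), (x', y') ∈ S, both x + y ≤ x' + y' and x − y ≤ x' − y' hold, or both reverse inequalities hold (i.e., the length of the longest chain of the rotated points (x + y, x − y) in the coordinatewise order). -/
/-- For a finite set `P` of points in the unit square, the maximum number of points of `P`
lying on the graph of a single 1-Lipschitz function `f : [0,1] → ℝ` equals the maximum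
cardinality of a subset of `P` whose rotated points `(x + y, x − y)` form a chain in the
coordinatewise order. -/
theorem lipschitz_graph_count_eq_longest_chain
    (P : Finset (ℝ × ℝ))
    (hP : ∀ p ∈ P, p.1 ∈ Set.Icc (0 : ℝ) 1 ∧ p.2 ∈ Set.Icc (0 : ℝ) 1)
    (a b : ℕ)
    (ha : IsGreatest {n : ℕ | ∃ S ⊆ P, S.card = n ∧ ∃ f : ℝ → ℝ,
        (∀ s ∈ Set.Icc (0 : ℝ) 1, ∀ t ∈ Set.Icc (0 : ℝ) 1, |f s - f t| ≤ |s - t|) ∧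
        ∀ p ∈ S, f p.1 = p.2} a)
    (hb : IsGreatest {n : ℕ | ∃ S ⊆ P, S.card = n ∧
        ∀ p ∈ S, ∀ q ∈ S,
          (p.1 + p.2 ≤ q.1 + q.2 ∧ p.1 - p.2 ≤ q.1 - q.2) ∨
          (q.1 + q.2 ≤ p.1 + p.2 ∧ q.1 - q.2 ≤ p.1 - p.2)} b) :
    a = b := by
  apply le_antisymm
  · -- a ≤ b : a Lipschitz graph subset is a chain
    apply hb.2
    obtain ⟨S, hS, hcard, f, hf, hfS⟩ := ha.1
    refine ⟨S, hS, hcard, ?_⟩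
    intro p hp q hq
    have h1 := hP p (hS hp)
    have h2 := hP q (hS hq)
    have key := hf p.1 h1.1 q.1 h2.1
    rw [hfS p hp, hfS q hq, abs_sub_le_iff] at key
    rcases le_total p.1 q.1 with h | h
    · have habs : |p.1 - q.1| = q.1 - p.1 := by
        rw [abs_sub_comm]; exact abs_of_nonneg (by linarith)
      left
      constructor <;> linarith
    · have habs : |p.1 - q.1| = p.1 - q.1 := abs_of_nonneg (by linarith)
      right
      constructor <;> linarith
  · -- b ≤ a : a chain lies on a Lipschitz graph
    apply ha.2
    obtain ⟨S, hS, hcard, hchain⟩ := hb.1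
    rcases S.eq_empty_or_nonempty with rfl | hne
    · refine ⟨∅, Finset.empty_subset _, hcard, fun _ => 0, ?_, ?_⟩
      · intro s _ t _; simp [abs_nonneg]
      · intro p hp; simp at hp
    · set f : ℝ → ℝ := fun t => S.sup' hne (fun p => p.2 - |t - p.1|) with hfdef
      have key : ∀ u v : ℝ, f u - f v ≤ |u - v| := by
        intro u v
        rw [sub_le_iff_le_add]
        apply Finset.sup'_le
        intro p hp
        have h1 : p.2 - |u - p.1| ≤ (p.2 - |v - p.1|) + |u - v| := by
          have h2 := abs_sub_abs_le_abs_sub (v - p.1) (u - p.1)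
          have h3 : |v - p.1 - (u - p.1)| = |u - v| := by
            rw [abs_sub_comm]; ring_nf
          linarith
        have h4 : p.2 - |v - p.1| ≤ f v :=
          Finset.le_sup' (fun q : ℝ × ℝ => q.2 - |v - q.1|) hp
        linarith
      refine ⟨S, hS, hcard, f, ?_, ?_⟩
      · intro s _ t _
        rw [abs_sub_le_iff]
        refine ⟨key s t, ?_⟩
        rw [abs_sub_comm]; exact key t s
      · intro p hp
        apply le_antisymm
        · apply Finset.sup'_le
          intro q hq
          rcases hchain p hp q hq with ⟨_, h⟩ | ⟨h, _⟩
          · have := le_abs_self (q.1 - p.1)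
            have habs : |p.1 - q.1| = |q.1 - p.1| := abs_sub_comm _ _
            linarith
          · have := le_abs_self (p.1 - q.1)
            linarith
        · have := Finset.le_sup' (fun q : ℝ × ℝ => q.2 - |p.1 - q.1|) hp
          simp only [sub_self, abs_zero, sub_zero] at this
          exact this
end
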